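/- arXiv:1703.00591 — 4 statements merged into one kernel-verified Lean document; each statement's English description precedes it below -/
import Mathlib

section
/- Suppose each A_i = diag(A_i^{(11)},…,A_i^{(tt)}) with A_i^{(jj)} ∈ ℝ^{n_j×n_j}, and let 𝒜_j = {A_i^{(jj)}}_{i=1}^m. If dim 𝒩(𝒜_j) = 1, then 𝒜_j cannot be further block diagonalized. -/
open Matrix BigOperators Kronecker
open scoped ENNReal

namespace JBD

/-- Index type for `τ_n`-block partitioned `n×n` matrices, where the partition
`τ_n = (n 0, …, n (t-1))`. -/
abbrev BlkIdx {t : ℕ} (n : Fin t → ℕ) := Σ j : Fin t, Fin (n j)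

variable {t : ℕ} {n : Fin t → ℕ}

/-- The `τ_n`-block diagonal part `Bdiag_{τ_n}(A)`. -/
def bdiag (A : Matrix (BlkIdx n) (BlkIdx n) ℝ) : Matrix (BlkIdx n) (BlkIdx n) ℝ :=
  fun p q => if p.1 = q.1 then A p q else 0

/-- The `τ_n`-off-block diagonal part `OffBdiag_{τ_n}(A)`. -/
def offBdiag (A : Matrix (BlkIdx n) (BlkIdx n) ℝ) : Matrix (BlkIdx n) (BlkIdx n) ℝ :=
  A - bdiag A

/-- `A ∈ 𝔻_{τ_n}`, i.e. `A` is `τ_n`-block diagonal. -/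
def IsBlockDiag (A : Matrix (BlkIdx n) (BlkIdx n) ℝ) : Prop :=
  ∀ p q : BlkIdx n, p.1 ≠ q.1 → A p q = 0

/-- `P` is a permutation matrix. -/
def IsPermMatrix {I : Type*} [DecidableEq I] [Fintype I] (P : Matrix I I ℝ) : Prop :=
  ∃ σ : Equiv.Perm I, P = σ.permMatrix ℝ

/-- `P ∈ ℙ_{τ_n}`: a `τ_n`-block diagonal preserving permutation matrix. -/
def IsBDPerm (P : Matrix (BlkIdx n) (BlkIdx n) ℝ) : Prop :=
  IsPermMatrix P ∧
    ∀ D : Matrix (BlkIdx n) (BlkIdx n) ℝ, IsBlockDiag D → IsBlockDiag (Pᵀ * D * P)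

/-- `W ∈ 𝕎_{τ_n}`: nonsingular with `Bdiag_{τ_n}(Wᵀ W) = I`. -/
def MemW (W : Matrix (BlkIdx n) (BlkIdx n) ℝ) : Prop :=
  IsUnit W ∧ bdiag (Wᵀ * W) = 1

/-- `W` is a `τ_n`-block diagonalizer of the matrix set `𝒜 = {A i}`. -/
def IsDiagonalizer {m : ℕ} (A : Fin m → Matrix (BlkIdx n) (BlkIdx n) ℝ)
    (W : Matrix (BlkIdx n) (BlkIdx n) ℝ) : Prop :=
  IsUnit W ∧ ∀ i, IsBlockDiag (Wᵀ * A i * W)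

/-- The JBDP for `𝒜` is uniquely `τ_n`-block diagonalizable. -/
def UniquelyBD {m : ℕ} (A : Fin m → Matrix (BlkIdx n) (BlkIdx n) ℝ) : Prop :=
  (∃ W, IsDiagonalizer A W) ∧
    ∀ W W', IsDiagonalizer A W → IsDiagonalizer A W' →
      ∃ D P : Matrix (BlkIdx n) (BlkIdx n) ℝ,
        IsBlockDiag D ∧ IsUnit D ∧ IsBDPerm P ∧ W' = W * D * P

/-- The `j`-th diagonal block of a `τ_n`-partitioned matrix. -/
def dblock (A : Matrix (BlkIdx n) (BlkIdx n) ℝ) (j : Fin t) :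
    Matrix (Fin (n j)) (Fin (n j)) ℝ := fun x y => A ⟨j, x⟩ ⟨j, y⟩

/-- A family `B = {B i}` of `N×N` matrices can be (further) simultaneously block
diagonalized by congruence, with respect to some partition of `N` of cardinality `≥ 2`. -/
def CanSplit {N m : ℕ} (B : Fin m → Matrix (Fin N) (Fin N) ℝ) : Prop :=
  ∃ (s : ℕ) (k : Fin s → ℕ), 2 ≤ s ∧ (∀ j, 0 < k j) ∧ (∑ j, k j) = N ∧
    ∃ (e : Fin N ≃ BlkIdx k) (V : Matrix (Fin N) (Fin N) ℝ), IsUnit V ∧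
      ∀ i, IsBlockDiag (Matrix.reindex e e (Vᵀ * B i * V))

/-- The subspace `𝒩(ℬ) = {Z : B i * Z - Zᵀ * B i = 0 for all i}`. -/
def nSubmodule {m : ℕ} {I : Type*} [Fintype I] (B : Fin m → Matrix I I ℝ) :
    Submodule ℝ (Matrix I I ℝ) where
  carrier := {Z | ∀ i, B i * Z - Zᵀ * B i = 0}
  add_mem' := by
    intro a b ha hb i
    have h1 := ha i
    have h2 := hb i
    have : (B i * a - aᵀ * B i) + (B i * b - bᵀ * B i) = 0 := by rw [h1, h2, add_zero]
    calc B i * (a + b) - (a + b)ᵀ * B i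
        = (B i * a - aᵀ * B i) + (B i * b - bᵀ * B i) := by
          rw [Matrix.mul_add, Matrix.transpose_add, Matrix.add_mul]; abel
      _ = 0 := this
  zero_mem' := by intro i; simp
  smul_mem' := by
    intro c Z hZ i
    have h := hZ i
    calc B i * (c • Z) - (c • Z)ᵀ * B i = c • (B i * Z - Zᵀ * B i) := by
          rw [Matrix.mul_smul, Matrix.transpose_smul, Matrix.smul_mul, smul_sub]
      _ = 0 := by rw [h, smul_zero]

/-- Frobenius norm. -/
noncomputable def frob {I J : Type*} [Fintype I] [Fintype J] (A : Matrix I J ℝ) : ℝ :=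
  Real.sqrt (∑ i, ∑ j, (A i j) ^ 2)

/-- Spectral norm (operator 2-norm). -/
noncomputable def spec {I : Type*} [Fintype I] [DecidableEq I] (A : Matrix I I ℝ) : ℝ :=
  ‖Matrix.toEuclideanCLM (𝕜 := ℝ) A‖

/-- Singular values of a real matrix: square roots of the eigenvalues of `Aᵀ * A`
(one for each column index). -/
noncomputable def sv {I J : Type*} [Fintype I] [Fintype J] [DecidableEq J]
    (A : Matrix I J ℝ) (k : J) : ℝ :=
  Real.sqrt ((Matrix.isHermitian_conjTranspose_mul_self A).eigenvalues k)

/-- The smallest singular value. -/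
noncomputable def sigmaMin {I J : Type*} [Fintype I] [Fintype J] [DecidableEq J]
    (A : Matrix I J ℝ) : ℝ :=
  ⨅ k : J, sv A k

/-- The smallest nonzero singular value. -/
noncomputable def minNonzeroSV {I J : Type*} [Fintype I] [Fintype J] [DecidableEq J]
    (A : Matrix I J ℝ) : ℝ :=
  sInf {s | (∃ k, sv A k = s) ∧ s ≠ 0}

/-- The list of singular values sorted in increasing order. -/
noncomputable def svSorted {I J : Type*} [Fintype I] [Fintype J] [DecidableEq J]
    (A : Matrix I J ℝ) : List ℝ :=
  (Finset.univ.val.map (sv A)).sort (· ≤ ·)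

/-- The second smallest singular value. -/
noncomputable def secondSmallestSV {I J : Type*} [Fintype I] [Fintype J] [DecidableEq J]
    (A : Matrix I J ℝ) : ℝ :=
  (svSorted A).getD 1 0

/-- The matrix `G_{jk}` (for `j < k`), built from the diagonal blocks
`Aj i = A_i^{(jj)}` (size `a`) and `Ak i = A_i^{(kk)}` (size `b`). -/
noncomputable def Gjk {m a b : ℕ} (Aj : Fin m → Matrix (Fin a) (Fin a) ℝ)
    (Ak : Fin m → Matrix (Fin b) (Fin b) ℝ) :
    Matrix (Fin m × ((Fin b × Fin a) ⊕ (Fin b × Fin a))) ((Fin b × Fin a) ⊕ (Fin b × Fin a)) ℝ :=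
  fun r c =>
    Matrix.fromBlocks
      ((1 : Matrix (Fin b) (Fin b) ℝ) ⊗ₖ Aj r.1) ((Ak r.1)ᵀ ⊗ₖ (1 : Matrix (Fin a) (Fin a) ℝ))
      ((1 : Matrix (Fin b) (Fin b) ℝ) ⊗ₖ (Aj r.1)ᵀ) (Ak r.1 ⊗ₖ (1 : Matrix (Fin a) (Fin a) ℝ))
      r.2 c

/-- Column-major vectorization: `vecM Z (c, r) = Z r c`. -/
def vecM {a b : ℕ} (Z : Matrix (Fin a) (Fin b) ℝ) : Fin b × Fin a → ℝ :=
  fun p => Z p.2 p.1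

/-- The perfect-shuffle permutation matrix `Π_j`, satisfying
`shuffle a *ᵥ vecM Zᵀ = vecM Z`. -/
def shuffle (a : ℕ) : Matrix (Fin a × Fin a) (Fin a × Fin a) ℝ :=
  fun p q => if q = p.swap then 1 else 0

/-- The matrix `G_{jj}`, built from the diagonal blocks `Aj i = A_i^{(jj)}` (size `a`):
its `i`-th block row is `I ⊗ Aj i - ((Aj i)ᵀ ⊗ I) * Π_j`. -/
noncomputable def Gjj {m a : ℕ} (Aj : Fin m → Matrix (Fin a) (Fin a) ℝ) :
    Matrix (Fin m × (Fin a × Fin a)) (Fin a × Fin a) ℝ :=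
  fun r c =>
    ((1 : Matrix (Fin a) (Fin a) ℝ) ⊗ₖ Aj r.1
      - ((Aj r.1)ᵀ ⊗ₖ (1 : Matrix (Fin a) (Fin a) ℝ)) * shuffle a) r.2 c

/-- The matrix `M_{jk}` from Theorem 2.1, `M_{jk} = G_{jk}ᵀ G_{jk}`. -/
noncomputable def Mjk {m a b : ℕ} (Aj : Fin m → Matrix (Fin a) (Fin a) ℝ)
    (Ak : Fin m → Matrix (Fin b) (Fin b) ℝ) :
    Matrix ((Fin b × Fin a) ⊕ (Fin b × Fin a)) ((Fin b × Fin a) ⊕ (Fin b × Fin a)) ℝ :=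
  ∑ i, Matrix.fromBlocks
    ((1 : Matrix (Fin b) (Fin b) ℝ) ⊗ₖ ((Aj i)ᵀ * Aj i + Aj i * (Aj i)ᵀ))
    (Ak i ⊗ₖ Aj i + (Ak i)ᵀ ⊗ₖ (Aj i)ᵀ)
    (Ak i ⊗ₖ Aj i + (Ak i)ᵀ ⊗ₖ (Aj i)ᵀ)
    (((Ak i)ᵀ * Ak i + Ak i * (Ak i)ᵀ) ⊗ₖ (1 : Matrix (Fin a) (Fin a) ℝ))

/-- The modulus of uniqueness `ω_uniq = min_{j<k} σ_min(G_{jk})`, in terms of the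
family of diagonal blocks `Ab j i = A_i^{(jj)}`. -/
noncomputable def omegaUniq {m : ℕ}
    (Ab : ∀ j : Fin t, Fin m → Matrix (Fin (n j)) (Fin (n j)) ℝ) : ℝ :=
  ⨅ p : {p : Fin t × Fin t // p.1 < p.2}, sigmaMin (Gjk (Ab p.1.1) (Ab p.1.2))

/-- The modulus of non-divisibility `ω_rob` (`+∞` when `τ_n = (1,…,1)`), in terms of
the family of diagonal blocks `Ab j i = A_i^{(jj)}`. -/
noncomputable def omegaRob {m : ℕ}
    (Ab : ∀ j : Fin t, Fin m → Matrix (Fin (n j)) (Fin (n j)) ℝ) : ℝ≥0∞ :=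
  ⨅ (j : Fin t) (_ : 1 < n j), ENNReal.ofReal (minNonzeroSV (Gjj (Ab j)))

/-- The matrix `Γ = diag(γ_1 I_{n_1}, …, γ_t I_{n_t})`. -/
def gmat (γ : Fin t → ℝ) : Matrix (BlkIdx n) (BlkIdx n) ℝ :=
  Matrix.diagonal (fun p => γ p.1)

/-- The gap `g = min_{j ≠ k} |γ_j - γ_k|`. -/
noncomputable def gammaGap (γ : Fin t → ℝ) : ℝ :=
  ⨅ p : {p : Fin t × Fin t // p.1 ≠ p.2}, |γ p.1.1 - γ p.1.2|

/-- The multiset of complex eigenvalues (with algebraic multiplicity) of a real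
square matrix: the roots of its characteristic polynomial over `ℂ`. -/
noncomputable def eigMultiset {I : Type*} [Fintype I] [DecidableEq I]
    (Z : Matrix I I ℝ) : Multiset ℂ :=
  (Z.map (Complex.ofReal)).charpoly.roots

/-- The `j`-th block column of `P`, with its `j`-th (diagonal) block replaced by `0`:
the matrix `P̂_j`. -/
def hatColumn (P : Matrix (BlkIdx n) (BlkIdx n) ℝ) (j : Fin t) :
    Matrix (BlkIdx n) (Fin (n j)) ℝ :=
  fun p y => if p.1 = j then 0 else P p ⟨j, y⟩

/-! If all `Vᵀ * B i * V` are block diagonal for a partition into `s` blocks, then every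
block-scalar matrix `diag(c₁ I, …, c_s I)` is symmetric and commutes with them, hence lies in
`𝒩(Vᵀ ℬ V)`; and `W ↦ V W V⁻¹` embeds `𝒩(Vᵀ ℬ V)` into `𝒩(ℬ)`. So `dim 𝒩(ℬ) ≥ s ≥ 2`. -/

section NSubmodule

variable {m : ℕ} {I : Type*} [Fintype I] [DecidableEq I]

theorem mem_nSubmodule_congr_iff {B : Fin m → Matrix I I ℝ} {V : Matrix I I ℝ}
    (hV : IsUnit V.det) (W : Matrix I I ℝ) :
    W ∈ nSubmodule (fun i => Vᵀ * B i * V) ↔ V * W * V⁻¹ ∈ nSubmodule B := by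
  have hVt : IsUnit Vᵀ.det := isUnit_det_transpose V hV
  have conj_defect : ∀ i, B i * (V * W * V⁻¹) - (V * W * V⁻¹)ᵀ * B i
      = (Vᵀ)⁻¹ * (Vᵀ * B i * V * W - Wᵀ * (Vᵀ * B i * V)) * V⁻¹ := by
    intro i
    simp only [Matrix.mul_sub, Matrix.sub_mul, transpose_mul, transpose_nonsing_inv,
      ← Matrix.mul_assoc, nonsing_inv_mul _ hVt, Matrix.one_mul]
    simp only [Matrix.mul_assoc, mul_nonsing_inv _ hV, Matrix.mul_one]
  refine forall_congr' fun i => ?_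
  rw [conj_defect,
    (isUnit_nonsing_inv_iff.mpr ((isUnit_iff_isUnit_det V).mpr hV)).mul_left_eq_zero,
    (isUnit_nonsing_inv_iff.mpr ((isUnit_iff_isUnit_det Vᵀ).mpr hVt)).mul_right_eq_zero]

theorem finrank_nSubmodule_congr_le (B : Fin m → Matrix I I ℝ) {V : Matrix I I ℝ}
    (hV : IsUnit V.det) :
    Module.finrank ℝ (nSubmodule fun i => Vᵀ * B i * V) ≤ Module.finrank ℝ (nSubmodule B) := by
  let conj : Matrix I I ℝ →ₗ[ℝ] Matrix I I ℝ :=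
    LinearMap.mulLeft ℝ V ∘ₗ LinearMap.mulRight ℝ V⁻¹
  have hconj : Function.Injective conj :=
    Function.LeftInverse.injective (g := fun W => V⁻¹ * W * V) fun W => by
      simp [conj, Matrix.mul_assoc, nonsing_inv_mul _ hV, nonsing_inv_mul_cancel_left _ _ hV]
  refine LinearMap.finrank_le_finrank_of_injective
    (f := conj.restrict fun W hW => ?_) (fun W W' h => Subtype.ext (hconj congr($h.1)))
  simpa [conj, Matrix.mul_assoc] using (mem_nSubmodule_congr_iff hV W).mp hW

end NSubmodule

section BlockScalar

variable {m : ℕ} {I ι : Type*} [DecidableEq I]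

def blockScalar (f : I → ι) : (ι → ℝ) →ₗ[ℝ] Matrix I I ℝ :=
  diagonalLinearMap I ℝ ℝ ∘ₗ LinearMap.funLeft ℝ ℝ f

theorem blockScalar_injective {f : I → ι} (hf : Function.Surjective f) :
    Function.Injective (blockScalar f) :=
  diagonal_injective.comp (LinearMap.funLeft_injective_of_surjective ℝ ℝ f hf)

theorem blockScalar_mem_nSubmodule [Fintype I] {B : Fin m → Matrix I I ℝ} {f : I → ι}
    (hB : ∀ i x y, f x ≠ f y → B i x y = 0) (c : ι → ℝ) :
    blockScalar f c ∈ nSubmodule B := by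
  intro i
  ext x y
  by_cases h : f x = f y
  · simp [blockScalar, h, mul_comm]
  · simp [blockScalar, hB i x y h]

theorem card_le_finrank_nSubmodule [Fintype I] [Fintype ι] {B : Fin m → Matrix I I ℝ} {f : I → ι}
    (hf : Function.Surjective f) (hB : ∀ i x y, f x ≠ f y → B i x y = 0) :
    Fintype.card ι ≤ Module.finrank ℝ (nSubmodule B) := by
  rw [← Module.finrank_fintype_fun_eq_card ℝ]
  exact LinearMap.finrank_le_finrank_of_injective
    (f := (blockScalar f).codRestrict _ (blockScalar_mem_nSubmodule hB))
    (fun c c' h => blockScalar_injective hf congr($h.1))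

end BlockScalar

theorem not_canSplit_of_finrank_nSubmodule_eq_one_general {m N : ℕ}
    (B : Fin m → Matrix (Fin N) (Fin N) ℝ)
    (hdim : Module.finrank ℝ (nSubmodule B) = 1) :
    ¬ CanSplit B := by
  rintro ⟨s, k, hs, hk, -, e, V, hV, hbd⟩
  let block : Fin N → Fin s := fun x => (e x).1
  have hblock : Function.Surjective block := fun j => ⟨e.symm ⟨j, 0, hk j⟩, by simp [block]⟩
  have hblockDiag : ∀ i x y, block x ≠ block y → (Vᵀ * B i * V) x y = 0 := fun i x y h => by
    simpa using hbd i (e x) (e y) h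
  have hsplit := card_le_finrank_nSubmodule hblock hblockDiag
  have hcongr := finrank_nSubmodule_congr_le B ((isUnit_iff_isUnit_det V).mp hV)
  rw [Fintype.card_fin] at hsplit
  omega

/-- Theorem 2.2(c): if `dim 𝒩(𝒜_j) = 1` then `𝒜_j` cannot be further
block diagonalized. -/
theorem not_canSplit_of_finrank_nSubmodule_eq_one {m N : ℕ} (hN : 0 < N)
    (B : Fin m → Matrix (Fin N) (Fin N) ℝ)
    (hdim : Module.finrank ℝ (nSubmodule B) = 1) :
    ¬ CanSplit B :=
  not_canSplit_of_finrank_nSubmodule_eq_one_general B hdim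

end JBD
end

section
/- Let W̃ ∈ ℝ^{n×n} be nonsingular, Ã_i ∈ ℝ^{n×n} for 1 ≤ i ≤ m, Γ = diag(γ_1 I_{n_1},…,γ_t I_{n_t}) with distinct real γ_1,…,γ_t, g = min_{j≠k} |γ_j − γ_k|, R̃_i = W̃ᵀ Ã_i W̃ Γ − Γ W̃ᵀ Ã_i W̃, and r̃ = (Σ_{i=1}^m ‖R̃_i‖_F²)^{1/2}. Then there exist matrices E_1,…,E_m ∈ ℝ^{n×n} such that W̃ᵀ (Ã_i + E_i) W̃ is τ_n-block diagonal for every i, and (Σ_{i=1}^m ‖E_i‖_F²)^{1/2} ≤ ‖W̃^{−1}‖₂² · r̃ / g. -/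
open Matrix BigOperators Kronecker
open scoped ENNReal

namespace JBD

variable {t : ℕ} {n : Fin t → ℕ}

/-! With `B = Wᵀ A W`, the perturbation `E = -W⁻ᵀ OffBdiag(B) W⁻¹` makes `Wᵀ (A + E) W = Bdiag(B)`,
and `‖E‖_F ≤ ‖W⁻¹‖₂² ‖OffBdiag(B)‖_F`. Since `Γ` is block scalar, the `(p, q)` entry of the
residual `B Γ - Γ B` is `(γ_q - γ_p) B_pq`, so every off-block entry of `B` is at most `1/g` times
the corresponding entry of the residual. -/

section Frobenius

variable {I J : Type*} [Fintype I] [Fintype J]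

lemma frob_nonneg (A : Matrix I J ℝ) : 0 ≤ frob A := Real.sqrt_nonneg _

lemma frob_sq (A : Matrix I J ℝ) : frob A ^ 2 = ∑ i, ∑ j, A i j ^ 2 :=
  Real.sq_sqrt (by positivity)

lemma frob_zero : frob (0 : Matrix I J ℝ) = 0 := by simp [frob]

lemma frob_neg (A : Matrix I J ℝ) : frob (-A) = frob A := by simp [frob]

lemma frob_transpose (A : Matrix I J ℝ) : frob Aᵀ = frob A := by
  unfold frob
  rw [Finset.sum_comm]
  rfl

lemma mul_frob_le_frob_of_sq_le {A B : Matrix I J ℝ} {c : ℝ} (hc : 0 ≤ c)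
    (h : ∀ i j, c ^ 2 * A i j ^ 2 ≤ B i j ^ 2) : c * frob A ≤ frob B := by
  refine (pow_le_pow_iff_left₀ (mul_nonneg hc (frob_nonneg A)) (frob_nonneg B)
    two_ne_zero).mp ?_
  rw [mul_pow, frob_sq, frob_sq, Finset.mul_sum]
  refine Finset.sum_le_sum fun i _ => ?_
  rw [Finset.mul_sum]
  exact Finset.sum_le_sum fun j _ => h i j

variable [DecidableEq I]

lemma spec_nonneg (A : Matrix I I ℝ) : 0 ≤ spec A := norm_nonneg _

lemma spec_transpose (A : Matrix I I ℝ) : spec Aᵀ = spec A := by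
  open scoped Matrix.Norms.L2Operator in
  have h := l2_opNorm_conjTranspose (𝕜 := ℝ) A
  rwa [conjTranspose_eq_transpose_of_trivial] at h

lemma sum_sq_mul_apply_le {K : Type*} (A : Matrix I I ℝ) (B : Matrix I K ℝ) (k : K) :
    ∑ i, (A * B) i k ^ 2 ≤ spec A ^ 2 * ∑ i, B i k ^ 2 := by
  have hcol := (Matrix.toEuclideanCLM (𝕜 := ℝ) A).le_opNorm (WithLp.toLp 2 fun i => B i k)
  have hsq := pow_le_pow_left₀ (norm_nonneg _) hcol 2
  rw [mul_pow, EuclideanSpace.real_norm_sq_eq, EuclideanSpace.real_norm_sq_eq] at hsq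
  simpa [Matrix.mul_apply, Matrix.mulVec, dotProduct, spec] using hsq

lemma frob_mul_le_spec_mul_frob (A : Matrix I I ℝ) (B : Matrix I J ℝ) :
    frob (A * B) ≤ spec A * frob B := by
  refine (pow_le_pow_iff_left₀ (frob_nonneg _) (mul_nonneg (spec_nonneg A) (frob_nonneg B))
    two_ne_zero).mp ?_
  rw [mul_pow, frob_sq, frob_sq, Finset.sum_comm, Finset.sum_comm (f := fun i j => B i j ^ 2),
    Finset.mul_sum]
  exact Finset.sum_le_sum fun j _ => sum_sq_mul_apply_le A B j

lemma frob_mul_le_frob_mul_spec (B : Matrix J I ℝ) (A : Matrix I I ℝ) :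
    frob (B * A) ≤ frob B * spec A := by
  rw [← frob_transpose, transpose_mul, ← spec_transpose A, ← frob_transpose B, mul_comm]
  exact frob_mul_le_spec_mul_frob _ _

lemma frob_transpose_mul_mul_le (M X : Matrix I I ℝ) :
    frob (Mᵀ * X * M) ≤ spec M ^ 2 * frob X :=
  calc frob (Mᵀ * X * M) ≤ spec Mᵀ * frob X * spec M :=
        (frob_mul_le_frob_mul_spec _ _).trans <|
          mul_le_mul_of_nonneg_right (frob_mul_le_spec_mul_frob _ _) (spec_nonneg M)
    _ = spec M ^ 2 * frob X := by rw [spec_transpose]; ring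

end Frobenius

lemma sqrt_sum_sq_le_mul_sqrt_sum_sq {ι : Type*} [Fintype ι] {f g : ι → ℝ} {c : ℝ}
    (hc : 0 ≤ c) (hf : ∀ i, 0 ≤ f i) (h : ∀ i, f i ≤ c * g i) :
    √(∑ i, f i ^ 2) ≤ c * √(∑ i, g i ^ 2) := by
  rw [← Real.sqrt_sq hc, ← Real.sqrt_mul (sq_nonneg c), Finset.mul_sum]
  refine Real.sqrt_le_sqrt <| Finset.sum_le_sum fun i _ => ?_
  rw [← mul_pow]
  exact pow_le_pow_left₀ (hf i) (h i) 2

section Gap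

variable (γ : Fin t → ℝ)

lemma gammaGap_nonneg : 0 ≤ gammaGap γ := Real.iInf_nonneg fun _ => abs_nonneg _

lemma gammaGap_le {j k : Fin t} (h : j ≠ k) : gammaGap γ ≤ |γ j - γ k| :=
  ciInf_le (Set.finite_range _).bddBelow (⟨(j, k), h⟩ : {p : Fin t × Fin t // p.1 ≠ p.2})

variable {γ}

lemma gammaGap_pos (hγ : Function.Injective γ) {j k : Fin t} (h : j ≠ k) : 0 < gammaGap γ := by
  have : Nonempty {p : Fin t × Fin t // p.1 ≠ p.2} := ⟨⟨(j, k), h⟩⟩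
  obtain ⟨p, hp⟩ := exists_eq_ciInf_of_finite
    (f := fun p : {p : Fin t × Fin t // p.1 ≠ p.2} => |γ p.1.1 - γ p.1.2|)
  rw [gammaGap, ← hp]
  exact abs_pos.mpr (sub_ne_zero.mpr (hγ.ne p.2))

end Gap

lemma bdiag_apply (A : Matrix (BlkIdx n) (BlkIdx n) ℝ) (p q : BlkIdx n) :
    bdiag A p q = if p.1 = q.1 then A p q else 0 := rfl

lemma offBdiag_apply (A : Matrix (BlkIdx n) (BlkIdx n) ℝ) (p q : BlkIdx n) :
    offBdiag A p q = if p.1 = q.1 then 0 else A p q := by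
  by_cases h : p.1 = q.1 <;> simp [offBdiag, bdiag_apply, h]

lemma isBlockDiag_bdiag (A : Matrix (BlkIdx n) (BlkIdx n) ℝ) : IsBlockDiag (bdiag A) :=
  fun _ _ h => if_neg h

lemma commutator_gmat_apply (B : Matrix (BlkIdx n) (BlkIdx n) ℝ) (γ : Fin t → ℝ)
    (p q : BlkIdx n) :
    (B * gmat γ - gmat γ * B : Matrix (BlkIdx n) (BlkIdx n) ℝ) p q = (γ q.1 - γ p.1) * B p q := by
  simp only [Matrix.sub_apply, gmat, mul_diagonal, diagonal_mul]
  ring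

lemma gammaGap_mul_frob_offBdiag_le (B : Matrix (BlkIdx n) (BlkIdx n) ℝ) (γ : Fin t → ℝ) :
    gammaGap γ * frob (offBdiag B) ≤ frob (B * gmat γ - gmat γ * B) := by
  refine mul_frob_le_frob_of_sq_le (gammaGap_nonneg γ) fun p q => ?_
  rw [offBdiag_apply, commutator_gmat_apply, mul_pow]
  split_ifs with h
  · rw [zero_pow two_ne_zero, mul_zero]
    positivity
  · refine mul_le_mul_of_nonneg_right ?_ (sq_nonneg _)
    rw [← sq_abs (γ q.1 - γ p.1), abs_sub_comm]
    exact pow_le_pow_left₀ (gammaGap_nonneg γ) (gammaGap_le γ h) 2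

lemma frob_offBdiag_le_div (B : Matrix (BlkIdx n) (BlkIdx n) ℝ) {γ : Fin t → ℝ}
    (hγ : Function.Injective γ) :
    frob (offBdiag B) ≤ frob (B * gmat γ - gmat γ * B) / gammaGap γ := by
  rcases (gammaGap_nonneg γ).eq_or_lt with hg | hg
  · -- for injective `γ` the gap vanishes only when there is a single block
    have : offBdiag B = 0 := by
      ext p q
      rw [offBdiag_apply, if_pos (by_contra fun h => (gammaGap_pos hγ h).ne hg), Matrix.zero_apply]
    rw [this, frob_zero]
    exact div_nonneg (frob_nonneg _) hg.le
  · rw [le_div_iff₀ hg, mul_comm]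
    exact gammaGap_mul_frob_offBdiag_le B γ

noncomputable def backwardPerturbation (W A : Matrix (BlkIdx n) (BlkIdx n) ℝ) :
    Matrix (BlkIdx n) (BlkIdx n) ℝ :=
  -((W⁻¹)ᵀ * offBdiag (Wᵀ * A * W) * W⁻¹)

lemma congr_add_backwardPerturbation {W : Matrix (BlkIdx n) (BlkIdx n) ℝ} (hW : IsUnit W)
    (A : Matrix (BlkIdx n) (BlkIdx n) ℝ) :
    Wᵀ * (A + backwardPerturbation W A) * W = bdiag (Wᵀ * A * W) := by
  have hinv : W⁻¹ * W = 1 := nonsing_inv_mul W ((isUnit_iff_isUnit_det W).mp hW)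
  have hinvT : Wᵀ * (W⁻¹)ᵀ = 1 := by rw [← transpose_mul, hinv, transpose_one]
  calc Wᵀ * (A + backwardPerturbation W A) * W
      = Wᵀ * A * W - (Wᵀ * (W⁻¹)ᵀ) * offBdiag (Wᵀ * A * W) * (W⁻¹ * W) := by
        rw [backwardPerturbation]; noncomm_ring
    _ = bdiag (Wᵀ * A * W) := by
        rw [hinvT, hinv, Matrix.one_mul, Matrix.mul_one, offBdiag, sub_sub_cancel]

lemma frob_backwardPerturbation_le (W A : Matrix (BlkIdx n) (BlkIdx n) ℝ) :
    frob (backwardPerturbation W A) ≤ spec W⁻¹ ^ 2 * frob (offBdiag (Wᵀ * A * W)) := by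
  rw [backwardPerturbation, frob_neg]
  exact frob_transpose_mul_mul_le _ _

theorem backward_error_general {t m : ℕ} {n : Fin t → ℕ}
    (Wt : Matrix (BlkIdx n) (BlkIdx n) ℝ) (hWt : IsUnit Wt)
    (At : Fin m → Matrix (BlkIdx n) (BlkIdx n) ℝ)
    (γ : Fin t → ℝ) (hγ : Function.Injective γ)
    (g : ℝ) (hg : g = gammaGap γ)
    (Rt : Fin m → Matrix (BlkIdx n) (BlkIdx n) ℝ)
    (hRt : ∀ i, Rt i = Wtᵀ * At i * Wt * gmat γ - gmat γ * (Wtᵀ * At i * Wt))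
    (r : ℝ) (hr : r = Real.sqrt (∑ i, frob (Rt i) ^ 2)) :
    ∃ E : Fin m → Matrix (BlkIdx n) (BlkIdx n) ℝ,
      (∀ i, IsBlockDiag (Wtᵀ * (At i + E i) * Wt)) ∧
      Real.sqrt (∑ i, frob (E i) ^ 2) ≤ spec Wt⁻¹ ^ 2 * r / g := by
  subst hg hr
  refine ⟨fun i => backwardPerturbation Wt (At i), fun i => ?_, ?_⟩
  · rw [congr_add_backwardPerturbation hWt]
    exact isBlockDiag_bdiag _
  have hE : ∀ i, frob (backwardPerturbation Wt (At i))
      ≤ spec Wt⁻¹ ^ 2 / gammaGap γ * frob (Rt i) := fun i =>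
    calc frob (backwardPerturbation Wt (At i))
        ≤ spec Wt⁻¹ ^ 2 * frob (offBdiag (Wtᵀ * At i * Wt)) := frob_backwardPerturbation_le _ _
      _ ≤ spec Wt⁻¹ ^ 2 * (frob (Rt i) / gammaGap γ) := by
        rw [hRt]
        gcongr
        exact frob_offBdiag_le_div _ hγ
      _ = spec Wt⁻¹ ^ 2 / gammaGap γ * frob (Rt i) := by ring
  calc √(∑ i, frob (backwardPerturbation Wt (At i)) ^ 2)
      ≤ spec Wt⁻¹ ^ 2 / gammaGap γ * √(∑ i, frob (Rt i) ^ 2) :=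
        sqrt_sum_sq_le_mul_sqrt_sum_sq (div_nonneg (sq_nonneg _) (gammaGap_nonneg γ))
          (fun i => frob_nonneg _) hE
    _ = spec Wt⁻¹ ^ 2 * √(∑ i, frob (Rt i) ^ 2) / gammaGap γ := by ring

/-- Proposition 3.2: backward error. `W̃` exactly block diagonalizes the
perturbed set `{Ã_i + E_i}` with `(Σ ‖E_i‖_F²)^{1/2} ≤ ‖W̃⁻¹‖₂² r̃ / g`. -/
theorem backward_error {t m : ℕ} {n : Fin t → ℕ} (hn : ∀ j, 0 < n j)
    (Wt : Matrix (BlkIdx n) (BlkIdx n) ℝ) (hWt : IsUnit Wt)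
    (At : Fin m → Matrix (BlkIdx n) (BlkIdx n) ℝ)
    (γ : Fin t → ℝ) (hγ : Function.Injective γ)
    (g : ℝ) (hg : g = gammaGap γ)
    (Rt : Fin m → Matrix (BlkIdx n) (BlkIdx n) ℝ)
    (hRt : ∀ i, Rt i = Wtᵀ * At i * Wt * gmat γ - gmat γ * (Wtᵀ * At i * Wt))
    (r : ℝ) (hr : r = Real.sqrt (∑ i, frob (Rt i) ^ 2)) :
    ∃ E : Fin m → Matrix (BlkIdx n) (BlkIdx n) ℝ,
      (∀ i, IsBlockDiag (Wtᵀ * (At i + E i) * Wt)) ∧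
      Real.sqrt (∑ i, frob (E i) ^ 2) ≤ spec Wt⁻¹ ^ 2 * r / g :=
  backward_error_general Wt hWt At γ hγ g hg Rt hRt r hr

end JBD
end

section
/- For every W ∈ 𝕎_{τ_n}, where τ_n has cardinality t, the spectral norm satisfies 1 ≤ ‖W‖₂ ≤ √t. -/
open Matrix BigOperators Kronecker
open scoped ENNReal

namespace JBD

variable {t : ℕ} {n : Fin t → ℕ}

/-! A vector supported on a single block `j` only sees the `(j, j)` block of `Wᵀ W`, which is
the identity, so `W` is isometric on each block subspace. This gives `‖W‖₂ ≥ 1` on a standard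
basis vector, and splitting an arbitrary vector into its `t` block parts, the triangle and
Cauchy–Schwarz inequalities give `‖W x‖ ≤ ∑ ‖x_j‖ ≤ √t ‖x‖`. -/

theorem norm_sum_le_sqrt_card_mul_sqrt_sum_sq {ι E : Type*} [Fintype ι]
    [SeminormedAddCommGroup E] (y : ι → E) :
    ‖∑ i, y i‖ ≤ √(Fintype.card ι : ℝ) * √(∑ i, ‖y i‖ ^ 2) := by
  have hcs : (∑ i, ‖y i‖) ^ 2 ≤ Fintype.card ι * ∑ i, ‖y i‖ ^ 2 := by
    simpa using sq_sum_le_card_mul_sum_sq (s := Finset.univ) (f := fun i => ‖y i‖)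
  calc ‖∑ i, y i‖ ≤ ∑ i, ‖y i‖ := norm_sum_le _ _
    _ = √((∑ i, ‖y i‖) ^ 2) := (Real.sqrt_sq (by positivity)).symm
    _ ≤ √(Fintype.card ι * ∑ i, ‖y i‖ ^ 2) := Real.sqrt_le_sqrt hcs
    _ = √(Fintype.card ι : ℝ) * √(∑ i, ‖y i‖ ^ 2) := Real.sqrt_mul (by positivity) _

def blockPart (j : Fin t) (x : EuclideanSpace ℝ (BlkIdx n)) : EuclideanSpace ℝ (BlkIdx n) :=
  WithLp.toLp 2 fun p => if p.1 = j then x p else 0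

theorem blockPart_apply_of_ne {j : Fin t} (x : EuclideanSpace ℝ (BlkIdx n)) {p : BlkIdx n}
    (hp : p.1 ≠ j) : blockPart j x p = 0 := by
  simp [blockPart, hp]

theorem sum_blockPart (x : EuclideanSpace ℝ (BlkIdx n)) : ∑ j, blockPart j x = x := by
  ext p
  simp [blockPart]

theorem sum_norm_blockPart_sq (x : EuclideanSpace ℝ (BlkIdx n)) :
    ∑ j, ‖blockPart j x‖ ^ 2 = ‖x‖ ^ 2 := by
  simp only [EuclideanSpace.real_norm_sq_eq, blockPart]
  rw [Finset.sum_comm]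
  simp [apply_ite (· ^ 2)]

theorem dotProduct_bdiag_mulVec_of_supported (M : Matrix (BlkIdx n) (BlkIdx n) ℝ) {j : Fin t}
    {v : BlkIdx n → ℝ} (hv : ∀ p : BlkIdx n, p.1 ≠ j → v p = 0) :
    v ⬝ᵥ (bdiag M *ᵥ v) = v ⬝ᵥ (M *ᵥ v) := by
  simp only [dotProduct, mulVec, Finset.mul_sum]
  refine Finset.sum_congr rfl fun p _ => Finset.sum_congr rfl fun q _ => ?_
  by_cases hpq : p.1 = q.1
  · simp [bdiag, hpq]
  · rcases eq_or_ne p.1 j with hp | hp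
    · simp [hv q fun hq => hpq (hp.trans hq.symm)]
    · simp [hv p hp]

theorem norm_toEuclideanCLM_of_supported {W : Matrix (BlkIdx n) (BlkIdx n) ℝ}
    (hW : bdiag (Wᵀ * W) = 1) {j : Fin t} {x : EuclideanSpace ℝ (BlkIdx n)}
    (hx : ∀ p : BlkIdx n, p.1 ≠ j → x p = 0) :
    ‖toEuclideanCLM (𝕜 := ℝ) W x‖ = ‖x‖ := by
  have hsq : ‖toEuclideanCLM (𝕜 := ℝ) W x‖ ^ 2 = ‖x‖ ^ 2 := by
    obtain ⟨v, rfl⟩ : ∃ v, WithLp.toLp 2 v = x := ⟨x.ofLp, rfl⟩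
    have hgram : (W *ᵥ v) ⬝ᵥ (W *ᵥ v) = v ⬝ᵥ ((Wᵀ * W) *ᵥ v) := by
      rw [← mulVec_mulVec, dotProduct_mulVec v Wᵀ, vecMul_transpose]
    rw [toEuclideanCLM_toLp, ← real_inner_self_eq_norm_sq, ← real_inner_self_eq_norm_sq,
      EuclideanSpace.inner_toLp_toLp, EuclideanSpace.inner_toLp_toLp, star_trivial,
      star_trivial, hgram, ← dotProduct_bdiag_mulVec_of_supported _ hx, hW, one_mulVec]
  exact (pow_left_inj₀ (norm_nonneg _) (norm_nonneg _) two_ne_zero).1 hsq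

theorem one_le_spec_of_bdiag_eq_one [Nonempty (BlkIdx n)] {W : Matrix (BlkIdx n) (BlkIdx n) ℝ}
    (hW : bdiag (Wᵀ * W) = 1) : 1 ≤ spec W := by
  obtain ⟨p⟩ := ‹Nonempty (BlkIdx n)›
  have he : ‖EuclideanSpace.single p (1 : ℝ)‖ = 1 := by simp
  have hWe : ‖toEuclideanCLM (𝕜 := ℝ) W (EuclideanSpace.single p 1)‖ = 1 := by
    rw [norm_toEuclideanCLM_of_supported hW (j := p.1) fun q hq => ?_, he]
    have hqp : q ≠ p := fun h => hq (congrArg Sigma.fst h)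
    simp [hqp]
  have := (toEuclideanCLM (𝕜 := ℝ) W).le_opNorm (EuclideanSpace.single p 1)
  rwa [hWe, he, mul_one] at this

theorem spec_le_sqrt_of_bdiag_eq_one {W : Matrix (BlkIdx n) (BlkIdx n) ℝ}
    (hW : bdiag (Wᵀ * W) = 1) : spec W ≤ √(t : ℝ) := by
  refine ContinuousLinearMap.opNorm_le_bound _ (Real.sqrt_nonneg _) fun x => ?_
  have hparts (j : Fin t) : ‖toEuclideanCLM (𝕜 := ℝ) W (blockPart j x)‖ = ‖blockPart j x‖ :=
    norm_toEuclideanCLM_of_supported hW fun _ hp => blockPart_apply_of_ne x hp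
  calc ‖toEuclideanCLM (𝕜 := ℝ) W x‖
      = ‖∑ j, toEuclideanCLM (𝕜 := ℝ) W (blockPart j x)‖ := by rw [← map_sum, sum_blockPart]
    _ ≤ √(t : ℝ) * √(∑ j, ‖toEuclideanCLM (𝕜 := ℝ) W (blockPart j x)‖ ^ 2) := by
      simpa using norm_sum_le_sqrt_card_mul_sqrt_sum_sq
        fun j => toEuclideanCLM (𝕜 := ℝ) W (blockPart j x)
    _ = √(t : ℝ) * ‖x‖ := by
      simp only [hparts, sum_norm_blockPart_sq, Real.sqrt_sq (norm_nonneg x)]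

/-- for `W ∈ 𝕎_{τ_n}`, `1 ≤ ‖W‖₂ ≤ √t`. -/
theorem spec_norm_bounds_of_memW {t : ℕ} {n : Fin t → ℕ} (ht : 0 < t) (hn : ∀ j, 0 < n j)
    (W : Matrix (BlkIdx n) (BlkIdx n) ℝ) (hW : MemW W) :
    1 ≤ spec W ∧ spec W ≤ Real.sqrt (t : ℝ) := by
  have : Nonempty (BlkIdx n) := ⟨⟨⟨0, ht⟩, ⟨0, hn _⟩⟩⟩
  exact ⟨one_le_spec_of_bdiag_eq_one hW.2, spec_le_sqrt_of_bdiag_eq_one hW.2⟩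

end JBD
end

section
/- Let W, W̃ ∈ 𝕎_{τ_n}, D ∈ 𝔻_{τ_n} and Π ∈ ℙ_{τ_n}. If W̃ = W D Π, then D is orthogonal, and consequently ‖W̃‖₂ = ‖W‖₂. -/
open Matrix BigOperators Kronecker
open scoped ENNReal

namespace JBD

variable {t : ℕ} {n : Fin t → ℕ}

/-! Conjugation by a `τ_n`-block diagonal `D` commutes with `bdiag`, and conjugation by
`Π ∈ ℙ_{τ_n}` moves each diagonal-block entry to a diagonal-block entry. Hence
`I = Bdiag(W̃ᵀ W̃) = Bdiag(Πᵀ Dᵀ (Wᵀ W) D Π)` forces `Dᵀ D = Dᵀ Bdiag(Wᵀ W) D = I`.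
Then `D Π` is orthogonal, and right multiplication by an orthogonal matrix preserves the
spectral norm. -/

variable {R : Type*} {I : Type*} [DecidableEq I] [Fintype I]

lemma permMatrix_transpose_mul_mul_permMatrix [Semiring R] (σ : Equiv.Perm I) (M : Matrix I I R) :
    (σ.permMatrix R)ᵀ * M * σ.permMatrix R = M.submatrix σ.symm σ.symm := by
  rw [transpose_permMatrix, Matrix.mul_assoc, PEquiv.mul_toMatrix_toPEquiv,
    PEquiv.toMatrix_toPEquiv_mul, Matrix.submatrix_submatrix]
  rfl

lemma permMatrix_transpose_mul_self [Semiring R] (σ : Equiv.Perm I) :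
    (σ.permMatrix R)ᵀ * σ.permMatrix R = 1 := by
  simpa using permMatrix_transpose_mul_mul_permMatrix σ (1 : Matrix I I R)

open scoped Matrix.Norms.L2Operator in
lemma spec_mul_of_transpose_mul_self_eq_one (A U : Matrix I I ℝ) (hU : Uᵀ * U = 1) :
    spec (A * U) = spec A := by
  have hU' : U ∈ unitary (Matrix I I ℝ) := by
    rw [Unitary.mem_iff, star_eq_conjTranspose, conjTranspose_eq_transpose_of_trivial]
    exact ⟨hU, mul_eq_one_comm.mp hU⟩
  exact CStarRing.norm_mul_mem_unitary A hU'

lemma isBlockDiag_single {a b : BlkIdx n} (hab : a.1 = b.1) (c : ℝ) :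
    IsBlockDiag (Matrix.single a b c) := by
  rintro p q hpq
  rw [Matrix.single_apply_of_ne]
  rintro ⟨rfl, rfl⟩
  exact hpq hab

lemma IsBDPerm.fst_eq_fst {σ : Equiv.Perm (BlkIdx n)} (hσ : IsBDPerm (σ.permMatrix ℝ))
    {a b : BlkIdx n} (hab : a.1 = b.1) : (σ a).1 = (σ b).1 := by
  by_contra hne
  have h := hσ.2 _ (isBlockDiag_single hab 1) (σ a) (σ b) hne
  rw [permMatrix_transpose_mul_mul_permMatrix] at h
  simp at h

lemma bdiag_transpose_mul_mul {D : Matrix (BlkIdx n) (BlkIdx n) ℝ} (hD : IsBlockDiag D)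
    (M : Matrix (BlkIdx n) (BlkIdx n) ℝ) :
    bdiag (Dᵀ * M * D) = Dᵀ * bdiag M * D := by
  have hterm : ∀ p q r s : BlkIdx n, D r p * bdiag M r s * D s q =
      if p.1 = q.1 then D r p * M r s * D s q else 0 := by
    intro p q r s
    by_cases hrp : r.1 = p.1
    · by_cases hsq : s.1 = q.1
      · simp only [bdiag, hrp, hsq]
        split_ifs <;> simp
      · simp [hD s q hsq]
    · simp [hD r p hrp]
  ext p q
  simp only [mul_apply, transpose_apply, Finset.sum_mul, hterm]
  unfold bdiag
  split_ifs <;> simp [mul_apply, Finset.sum_mul]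

lemma IsBDPerm.bdiag_eq_one_of_bdiag_conj_eq_one {P M : Matrix (BlkIdx n) (BlkIdx n) ℝ}
    (hP : IsBDPerm P) (h : bdiag (Pᵀ * M * P) = 1) : bdiag M = 1 := by
  obtain ⟨σ, rfl⟩ := hP.1
  rw [permMatrix_transpose_mul_mul_permMatrix] at h
  ext a b
  by_cases hab : a.1 = b.1
  · have hσab := congrFun (congrFun h (σ a)) (σ b)
    simp only [bdiag, submatrix_apply, Equiv.symm_apply_apply, hP.fst_eq_fst hab,
      if_true] at hσab
    simp only [bdiag, hab, if_true, hσab, one_apply, σ.injective.eq_iff]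
  · simp only [bdiag, hab, if_false, one_apply_ne (fun h => hab (congrArg Sigma.fst h))]

theorem blockDiag_factor_orthogonal_general {t : ℕ} {n : Fin t → ℕ}
    (W Wt D P : Matrix (BlkIdx n) (BlkIdx n) ℝ)
    (hW : MemW W) (hWt : MemW Wt) (hD : IsBlockDiag D) (hP : IsBDPerm P)
    (heq : Wt = W * D * P) :
    Dᵀ * D = 1 ∧ spec Wt = spec W := by
  have hWtWt : Wtᵀ * Wt = Pᵀ * (Dᵀ * (Wᵀ * W) * D) * P := by
    rw [heq]
    simp only [transpose_mul, Matrix.mul_assoc]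
  have hDD : Dᵀ * D = 1 := by
    rw [← hP.bdiag_eq_one_of_bdiag_conj_eq_one (hWtWt ▸ hWt.2), bdiag_transpose_mul_mul hD, hW.2,
      Matrix.mul_one]
  refine ⟨hDD, ?_⟩
  obtain ⟨σ, rfl⟩ := hP.1
  rw [heq, Matrix.mul_assoc]
  apply spec_mul_of_transpose_mul_self_eq_one
  rw [transpose_mul, Matrix.mul_assoc, ← Matrix.mul_assoc Dᵀ, hDD, Matrix.one_mul,
    permMatrix_transpose_mul_self]

/-- Lemma 3.4: if `W, W̃ ∈ 𝕎_{τ_n}` and `W̃ = W D Π` with `D ∈ 𝔻_{τ_n}`,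
`Π ∈ ℙ_{τ_n}`, then `D` is orthogonal and `‖W̃‖₂ = ‖W‖₂`. -/
theorem blockDiag_factor_orthogonal {t : ℕ} {n : Fin t → ℕ} (hn : ∀ j, 0 < n j)
    (W Wt D P : Matrix (BlkIdx n) (BlkIdx n) ℝ)
    (hW : MemW W) (hWt : MemW Wt) (hD : IsBlockDiag D) (hP : IsBDPerm P)
    (heq : Wt = W * D * P) :
    Dᵀ * D = 1 ∧ spec Wt = spec W :=
  blockDiag_factor_orthogonal_general W Wt D P hW hWt hD hP heq

end JBD
end
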